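/- Let 0 ≤ h ∈ L¹(a,b) with h ≢ 0 and let v ∈ C¹([a,b]) be the solution of −(φ(v'))' = h in (a,b), v(a) = v(b) = 0. Then v(x) ≥ θ̲_h · (sup_{[a,b]} |v|) · δ_Ω(x) for all x ∈ [a,b]. -/

import Mathlib

/-!
Since `φ` is increasing and `h ≥ 0`, `v'` is decreasing, so `v` is concave and, vanishing at
both ends, nonnegative. As `h = 0` a.e. outside `[α_h, β_h]`, `v'` is constant on `[a, α_h]`
and on `[β_h, b]`, with `v'(a) ≥ 0 ≥ v'(b)` by concavity; hence `v` attains its maximum `M`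
at some `x₀ ∈ [α_h, β_h]`. Concavity puts `v` above the tent of height `M` over `[a, b]` with
peak at `x₀`, and since `x₀ - a ≤ β_h - a` and `b - x₀ ≤ b - α_h` that tent dominates
`θ̲_h · M · δ_Ω`.
-/

open MeasureTheory Set Filter

/-- `φ` is an odd increasing homeomorphism of `ℝ`. -/
def OddIncHomeo (φ : ℝ → ℝ) : Prop :=
  StrictMono φ ∧ Continuous φ ∧ Function.Surjective φ ∧ ∀ x, φ (-x) = -φ x

/-- `v` is `C¹` on `[a,b]` with derivative `v'`. -/
def C1On (v v' : ℝ → ℝ) (a b : ℝ) : Prop :=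
  ContinuousOn v (Icc a b) ∧ ContinuousOn v' (Icc a b) ∧
  ∀ x ∈ Icc a b, HasDerivWithinAt v (v' x) (Icc a b) x

/-- `v` (with derivative `v'`) is a solution of `-(φ(v'))' = h` in `(a,b)`,
`v(a) = v(b) = 0`. -/
def IsSolutionH (φ h : ℝ → ℝ) (a b : ℝ) (v v' : ℝ → ℝ) : Prop :=
  C1On v v' a b ∧ v a = 0 ∧ v b = 0 ∧
  ∀ x ∈ Icc a b, φ (v' x) = φ (v' a) - ∫ s in a..x, h s

/-- `α_h = sup 𝒜_h` where `𝒜_h = {x ∈ (a,b) : h = 0 a.e. on (a,x)}`, with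
`α_h = a` if `𝒜_h = ∅`. -/
noncomputable def alphaH (h : ℝ → ℝ) (a b : ℝ) : ℝ :=
  sSup ({x | x ∈ Ioo a b ∧ ∀ᵐ y ∂(volume : Measure ℝ), y ∈ Ioo a x → h y = 0} ∪ {a})

/-- `β_h = inf ℬ_h` where `ℬ_h = {x ∈ (a,b) : h = 0 a.e. on (x,b)}`, with
`β_h = b` if `ℬ_h = ∅`. -/
noncomputable def betaH (h : ℝ → ℝ) (a b : ℝ) : ℝ :=
  sInf ({x | x ∈ Ioo a b ∧ ∀ᵐ y ∂(volume : Measure ℝ), y ∈ Ioo x b → h y = 0} ∪ {b})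

/-- `θ̲_h = min {1/(β_h - a), 1/(b - α_h)}`. -/
noncomputable def thetaLow (h : ℝ → ℝ) (a b : ℝ) : ℝ :=
  min (1 / (betaH h a b - a)) (1 / (b - alphaH h a b))

/-- `θ̄_h = (α_h + β_h)/2`. -/
noncomputable def thetaBar (h : ℝ → ℝ) (a b : ℝ) : ℝ :=
  (alphaH h a b + betaH h a b) / 2

/-- `δ_Ω(x) = min (x - a, b - x)`. -/
noncomputable def deltaOmega (a b x : ℝ) : ℝ := min (x - a) (b - x)

section CountableApproximation

variable {μ : Measure ℝ} {P : ℝ → Prop} {S : Set ℝ} {c : ℝ}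

theorem ae_mem_Ioo_csSup_imp (hS : S.Nonempty) (hP : ∀ x ∈ S, ∀ᵐ y ∂μ, y ∈ Ioo c x → P y) :
    ∀ᵐ y ∂μ, y ∈ Ioo c (sSup S) → P y := by
  have hq : ∀ q : ℚ, ∀ᵐ y ∂μ, (q : ℝ) < sSup S → y ∈ Ioo c (q : ℝ) → P y := by
    intro q
    by_cases hqS : (q : ℝ) < sSup S
    · obtain ⟨x, hxS, hqx⟩ := exists_lt_of_lt_csSup hS hqS
      filter_upwards [hP x hxS] with y hy _ hyq using hy ⟨hyq.1, hyq.2.trans hqx⟩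
    · exact Eventually.of_forall fun y hq _ => absurd hq hqS
  filter_upwards [ae_all_iff.2 hq] with y hy hyS
  obtain ⟨q, hyq, hqS⟩ := exists_rat_btwn hyS.2
  exact hy q hqS ⟨hyS.1, hyq⟩

theorem ae_mem_Ioo_csInf_imp (hS : S.Nonempty) (hP : ∀ x ∈ S, ∀ᵐ y ∂μ, y ∈ Ioo x c → P y) :
    ∀ᵐ y ∂μ, y ∈ Ioo (sInf S) c → P y := by
  have hq : ∀ q : ℚ, ∀ᵐ y ∂μ, sInf S < (q : ℝ) → y ∈ Ioo (q : ℝ) c → P y := by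
    intro q
    by_cases hqS : sInf S < (q : ℝ)
    · obtain ⟨x, hxS, hxq⟩ := exists_lt_of_csInf_lt hS hqS
      filter_upwards [hP x hxS] with y hy _ hyq using hy ⟨hxq.trans hyq.1, hyq.2⟩
    · exact Eventually.of_forall fun y hq _ => absurd hq hqS
  filter_upwards [ae_all_iff.2 hq] with y hy hyS
  obtain ⟨q, hSq, hqy⟩ := exists_rat_btwn hyS.1
  exact hy q hSq ⟨hqy, hyS.2⟩

end CountableApproximation

section SupportEndpoints

variable {h : ℝ → ℝ} {a b x : ℝ}

theorem alphaH_mem_Icc (hab : a ≤ b) : alphaH h a b ∈ Icc a b := by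
  refine ⟨le_csSup ?_ (Or.inr rfl), csSup_le ⟨a, Or.inr rfl⟩ ?_⟩
  · exact (bddAbove_Ioo.union bddAbove_singleton).mono (union_subset_union_left _ fun x hx => hx.1)
  · rintro x (hx | rfl)
    exacts [hx.1.2.le, hab]

theorem betaH_mem_Icc (hab : a ≤ b) : betaH h a b ∈ Icc a b := by
  refine ⟨le_csInf ⟨b, Or.inr rfl⟩ ?_, csInf_le ?_ (Or.inr rfl)⟩
  · rintro x (hx | rfl)
    exacts [hx.1.1.le, hab]
  · exact (bddBelow_Ioo.union bddBelow_singleton).mono (union_subset_union_left _ fun x hx => hx.1)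

theorem ae_restrict_Icc_alphaH_eq_zero : h =ᵐ[volume.restrict (Icc a (alphaH h a b))] 0 := by
  rw [EventuallyEq, ← Measure.restrict_congr_set Ioo_ae_eq_Icc, ae_restrict_iff' measurableSet_Ioo]
  refine ae_mem_Ioo_csSup_imp ⟨a, Or.inr rfl⟩ ?_
  rintro x (hx | rfl)
  · exact hx.2
  · simp

theorem ae_restrict_Icc_betaH_eq_zero : h =ᵐ[volume.restrict (Icc (betaH h a b) b)] 0 := by
  rw [EventuallyEq, ← Measure.restrict_congr_set Ioo_ae_eq_Icc, ae_restrict_iff' measurableSet_Ioo]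
  refine ae_mem_Ioo_csInf_imp ⟨b, Or.inr rfl⟩ ?_
  rintro x (hx | rfl)
  · exact hx.2
  · simp

theorem alphaH_le_betaH (hhne : ¬ ∀ᵐ x ∂(volume : Measure ℝ), x ∈ Ioo a b → h x = 0) :
    alphaH h a b ≤ betaH h a b := by
  by_contra! hβα
  apply hhne
  filter_upwards [(ae_restrict_iff' measurableSet_Icc).1 (ae_restrict_Icc_alphaH_eq_zero (h := h)),
    (ae_restrict_iff' measurableSet_Icc).1 (ae_restrict_Icc_betaH_eq_zero (h := h))]
    with y hα hβ hy
  rcases lt_or_ge y (alphaH h a b) with hyα | hαy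
  · exact hα ⟨hy.1.le, hyα.le⟩
  · exact hβ ⟨(hβα.trans_le hαy).le, hy.2.le⟩

theorem thetaLow_nonneg (hab : a ≤ b) : 0 ≤ thetaLow h a b :=
  le_min (one_div_nonneg.2 (sub_nonneg.2 (betaH_mem_Icc hab).1))
    (one_div_nonneg.2 (sub_nonneg.2 (alphaH_mem_Icc hab).2))

theorem thetaLow_mul_sub_left_le_one (hab : a ≤ b) (hx : x ≤ betaH h a b) :
    thetaLow h a b * (x - a) ≤ 1 := by
  have hβa : 0 ≤ betaH h a b - a := sub_nonneg.2 (betaH_mem_Icc hab).1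
  calc thetaLow h a b * (x - a) ≤ thetaLow h a b * (betaH h a b - a) := by
        gcongr
        exact thetaLow_nonneg hab
    _ ≤ 1 / (betaH h a b - a) * (betaH h a b - a) := by gcongr; exact min_le_left _ _
    _ ≤ 1 := by rw [one_div]; exact inv_mul_le_one_of_le₀ le_rfl hβa

theorem thetaLow_mul_sub_right_le_one (hab : a ≤ b) (hx : alphaH h a b ≤ x) :
    thetaLow h a b * (b - x) ≤ 1 := by
  have hbα : 0 ≤ b - alphaH h a b := sub_nonneg.2 (alphaH_mem_Icc hab).2
  calc thetaLow h a b * (b - x) ≤ thetaLow h a b * (b - alphaH h a b) := by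
        gcongr
        exact thetaLow_nonneg hab
    _ ≤ 1 / (b - alphaH h a b) * (b - alphaH h a b) := by gcongr; exact min_le_right _ _
    _ ≤ 1 := by rw [one_div]; exact inv_mul_le_one_of_le₀ le_rfl hbα

end SupportEndpoints

section Concave

variable {v : ℝ → ℝ} {a b x₀ x d t : ℝ}

theorem ConcaveOn.nonneg_of_eq_zero_of_eq_zero (hv : ConcaveOn ℝ (Icc a b) v) (ha : v a = 0)
    (hb : v b = 0) (hx : x ∈ Icc a b) : 0 ≤ v x := by
  have hab : a ≤ b := hx.1.trans hx.2
  simpa [ha, hb] using hv.ge_on_segment (left_mem_Icc.2 hab) (right_mem_Icc.2 hab)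
    ((segment_eq_Icc hab).symm ▸ hx)

theorem ConcaveOn.sub_left_mul_le (hv : ConcaveOn ℝ (Icc a b) v) (ha : v a = 0)
    (hx₀ : x₀ ∈ Icc a b) (hx : x ∈ Icc a x₀) : (x - a) * v x₀ ≤ (x₀ - a) * v x := by
  rcases hx.1.eq_or_lt with rfl | hax
  · simp [ha]
  rcases hx.2.eq_or_lt with rfl | hxx₀
  · exact le_rfl
  have := hv.neg.secant_mono_aux1 ⟨le_rfl, hx₀.1.trans hx₀.2⟩ hx₀ hax hxx₀
  simp only [Pi.neg_apply, ha, neg_zero, mul_zero, zero_add] at this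
  linarith

theorem ConcaveOn.sub_right_mul_le (hv : ConcaveOn ℝ (Icc a b) v) (hb : v b = 0)
    (hx₀ : x₀ ∈ Icc a b) (hx : x ∈ Icc x₀ b) : (b - x) * v x₀ ≤ (b - x₀) * v x := by
  rcases hx.2.eq_or_lt with rfl | hxb
  · simp [hb]
  rcases hx.1.eq_or_lt with rfl | hx₀x
  · exact le_rfl
  have := hv.neg.secant_mono_aux1 hx₀ ⟨hx₀.1.trans hx₀.2, le_rfl⟩ hx₀x hxb
  simp only [Pi.neg_apply, hb, neg_zero, mul_zero, add_zero] at this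
  linarith

theorem ConcaveOn.mul_min_sub_le (hv : ConcaveOn ℝ (Icc a b) v) (ha : v a = 0) (hb : v b = 0)
    (hx₀ : x₀ ∈ Icc a b) (ht : 0 ≤ t) (hta : t * (x₀ - a) ≤ 1) (htb : t * (b - x₀) ≤ 1)
    (hx : x ∈ Icc a b) : t * v x₀ * min (x - a) (b - x) ≤ v x := by
  have hvx₀ := hv.nonneg_of_eq_zero_of_eq_zero ha hb hx₀
  have hvx := hv.nonneg_of_eq_zero_of_eq_zero ha hb hx
  rcases le_total x x₀ with hxx₀ | hx₀x
  · calc t * v x₀ * min (x - a) (b - x) ≤ t * ((x - a) * v x₀) := by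
          rw [mul_assoc, mul_comm (v x₀)]; gcongr; exact min_le_left _ _
      _ ≤ t * ((x₀ - a) * v x) :=
          mul_le_mul_of_nonneg_left (hv.sub_left_mul_le ha hx₀ ⟨hx.1, hxx₀⟩) ht
      _ = t * (x₀ - a) * v x := by ring
      _ ≤ v x := mul_le_of_le_one_left hvx hta
  · calc t * v x₀ * min (x - a) (b - x) ≤ t * ((b - x) * v x₀) := by
          rw [mul_assoc, mul_comm (v x₀)]; gcongr; exact min_le_right _ _
      _ ≤ t * ((b - x₀) * v x) :=
          mul_le_mul_of_nonneg_left (hv.sub_right_mul_le hb hx₀ ⟨hx₀x, hx.2⟩) ht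
      _ = t * (b - x₀) * v x := by ring
      _ ≤ v x := mul_le_of_le_one_left hvx htb

theorem ConcaveOn.nonneg_of_hasDerivWithinAt_left (hv : ConcaveOn ℝ (Icc a b) v) (hab : a < b)
    (hvab : v a = v b) (hd : HasDerivWithinAt v d (Icc a b) a) : 0 ≤ d := by
  have := hv.slope_le_of_hasDerivWithinAt (left_mem_Icc.2 hab.le) (right_mem_Icc.2 hab.le) hab hd
  rwa [slope_def_field, hvab, sub_self, zero_div] at this

theorem ConcaveOn.nonpos_of_hasDerivWithinAt_right (hv : ConcaveOn ℝ (Icc a b) v) (hab : a < b)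
    (hvab : v a = v b) (hd : HasDerivWithinAt v d (Icc a b) b) : d ≤ 0 := by
  have := hv.le_slope_of_hasDerivWithinAt (left_mem_Icc.2 hab.le) (right_mem_Icc.2 hab.le) hab hd
  rwa [slope_def_field, hvab, sub_self, zero_div] at this

end Concave

theorem csSup_abs_image_eq_of_isMaxOn {α : Type*} {f : α → ℝ} {s : Set α} {x₀ : α}
    (hf : ∀ x ∈ s, 0 ≤ f x) (hx₀ : x₀ ∈ s) (hmax : IsMaxOn f s x₀) :
    sSup ((fun y => |f y|) '' s) = f x₀ := by
  refine IsGreatest.csSup_eq ⟨⟨x₀, hx₀, abs_of_nonneg (hf x₀ hx₀)⟩, ?_⟩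
  rintro _ ⟨y, hy, rfl⟩
  exact (abs_of_nonneg (hf y hy)).le.trans (isMaxOn_iff.1 hmax y hy)

theorem IsMaxOn.of_monotoneOn_of_antitoneOn {f : ℝ → ℝ} {a α β b x₀ : ℝ}
    (hmax : IsMaxOn f (Icc α β) x₀) (hαβ : α ≤ β) (hmono : MonotoneOn f (Icc a α))
    (hanti : AntitoneOn f (Icc β b)) : IsMaxOn f (Icc a b) x₀ := by
  rw [isMaxOn_iff] at hmax ⊢
  intro y hy
  rcases le_or_gt y α with hyα | hαy
  · exact (hmono ⟨hy.1, hyα⟩ ⟨hy.1.trans hyα, le_rfl⟩ hyα).trans (hmax α ⟨le_rfl, hαβ⟩)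
  rcases le_or_gt y β with hyβ | hβy
  · exact hmax y ⟨hαy.le, hyβ⟩
  · exact (hanti ⟨le_rfl, hβy.le.trans hy.2⟩ ⟨hβy.le, hy.2⟩ hβy.le).trans (hmax β ⟨hαβ, le_rfl⟩)

namespace C1On

variable {v v' : ℝ → ℝ} {a b c d x : ℝ}

theorem hasDerivAt (hv : C1On v v' a b) (hx : x ∈ Ioo a b) : HasDerivAt v (v' x) x :=
  (hv.2.2 x (Ioo_subset_Icc_self hx)).hasDerivAt (Icc_mem_nhds hx.1 hx.2)

theorem concaveOn (hv : C1On v v' a b) (hanti : AntitoneOn v' (Icc a b)) :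
    ConcaveOn ℝ (Icc a b) v := by
  have hderiv : EqOn v' (deriv v) (Ioo a b) := fun x hx => (hv.hasDerivAt hx).deriv.symm
  refine AntitoneOn.concaveOn_of_deriv (convex_Icc a b) hv.1 ?_ ?_ <;> rw [interior_Icc]
  · exact fun x hx => (hv.hasDerivAt hx).differentiableAt.differentiableWithinAt
  · exact (hanti.mono Ioo_subset_Icc_self).congr hderiv

theorem hasDerivWithinAt_Ioo (hv : C1On v v' a b) (hcd : Icc c d ⊆ Icc a b) (hx : x ∈ Ioo c d) :
    HasDerivWithinAt v (v' x) (Ioo c d) x :=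
  (hv.2.2 x (hcd (Ioo_subset_Icc_self hx))).mono (Ioo_subset_Icc_self.trans hcd)

theorem monotoneOn (hv : C1On v v' a b) (hcd : Icc c d ⊆ Icc a b)
    (hnonneg : ∀ x ∈ Ioo c d, 0 ≤ v' x) : MonotoneOn v (Icc c d) := by
  refine monotoneOn_of_hasDerivWithinAt_nonneg (f' := v') (convex_Icc c d) (hv.1.mono hcd) ?_ ?_ <;>
    rw [interior_Icc]
  exacts [fun x hx => hv.hasDerivWithinAt_Ioo hcd hx, hnonneg]

theorem antitoneOn (hv : C1On v v' a b) (hcd : Icc c d ⊆ Icc a b)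
    (hnonpos : ∀ x ∈ Ioo c d, v' x ≤ 0) : AntitoneOn v (Icc c d) := by
  refine antitoneOn_of_hasDerivWithinAt_nonpos (f' := v') (convex_Icc c d) (hv.1.mono hcd) ?_ ?_ <;>
    rw [interior_Icc]
  exacts [fun x hx => hv.hasDerivWithinAt_Ioo hcd hx, hnonpos]

end C1On

namespace IsSolutionH

variable {φ h v v' : ℝ → ℝ} {a b x y : ℝ}

theorem sub_eq_integral (hv : IsSolutionH φ h a b v v') (hh : IntegrableOn h (Icc a b))
    (hx : x ∈ Icc a b) (hy : y ∈ Icc a b) : φ (v' x) - φ (v' y) = ∫ s in x..y, h s := by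
  have hint : ∀ z ∈ Icc a b, IntervalIntegrable h volume a z := fun z hz =>
    (hh.mono_set (uIcc_subset_Icc ⟨le_rfl, hz.1.trans hz.2⟩ hz)).intervalIntegrable
  rw [hv.2.2.2 x hx, hv.2.2.2 y hy,
    ← intervalIntegral.integral_interval_sub_left (hint y hy) (hint x hx)]
  ring

theorem antitoneOn_deriv (hv : IsSolutionH φ h a b v v') (hφ : StrictMono φ)
    (hh : IntegrableOn h (Icc a b)) (hh0 : 0 ≤ᵐ[volume.restrict (Icc a b)] h) :
    AntitoneOn v' (Icc a b) := by
  intro x hx y hy hxy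
  refine hφ.le_iff_le.1 (sub_nonneg.1 ?_)
  rw [hv.sub_eq_integral hh hx hy]
  exact intervalIntegral.integral_nonneg_of_ae_restrict hxy
    (ae_restrict_of_ae_restrict_of_subset (Icc_subset_Icc hx.1 hy.2) hh0)

theorem deriv_eq_of_ae_eq_zero (hv : IsSolutionH φ h a b v v') (hφ : StrictMono φ)
    (hh : IntegrableOn h (Icc a b)) (hx : x ∈ Icc a b) (hy : y ∈ Icc a b) (hxy : x ≤ y)
    (hzero : h =ᵐ[volume.restrict (Icc x y)] 0) : v' x = v' y := by
  refine hφ.injective (sub_eq_zero.1 ?_)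
  rw [hv.sub_eq_integral hh hx hy, intervalIntegral.integral_of_le hxy]
  exact integral_eq_zero_of_ae (ae_restrict_of_ae_restrict_of_subset Ioc_subset_Icc_self hzero)

theorem exists_isMaxOn (hv : IsSolutionH φ h a b v v') (hab : a < b) (hφ : StrictMono φ)
    (hh : IntegrableOn h (Icc a b)) (hh0 : 0 ≤ᵐ[volume.restrict (Icc a b)] h)
    (hhne : ¬ ∀ᵐ x ∂(volume : Measure ℝ), x ∈ Ioo a b → h x = 0) :
    ∃ x₀ ∈ Icc (alphaH h a b) (betaH h a b), IsMaxOn v (Icc a b) x₀ := by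
  have hC1 := hv.1
  have hvab : v a = v b := hv.2.1.trans hv.2.2.1.symm
  have hα := alphaH_mem_Icc (h := h) hab.le
  have hβ := betaH_mem_Icc (h := h) hab.le
  have ha : a ∈ Icc a b := left_mem_Icc.2 hab.le
  have hb : b ∈ Icc a b := right_mem_Icc.2 hab.le
  have hconc := hC1.concaveOn (hv.antitoneOn_deriv hφ hh hh0)
  have hmono : MonotoneOn v (Icc a (alphaH h a b)) := by
    refine hC1.monotoneOn (Icc_subset_Icc_right hα.2) fun x hx => ?_
    rw [← hv.deriv_eq_of_ae_eq_zero hφ hh ha ⟨hx.1.le, hx.2.le.trans hα.2⟩ hx.1.le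
      (ae_restrict_of_ae_restrict_of_subset (Icc_subset_Icc_right hx.2.le)
        ae_restrict_Icc_alphaH_eq_zero)]
    exact hconc.nonneg_of_hasDerivWithinAt_left hab hvab (hC1.2.2 a ha)
  have hanti : AntitoneOn v (Icc (betaH h a b) b) := by
    refine hC1.antitoneOn (Icc_subset_Icc_left hβ.1) fun x hx => ?_
    rw [hv.deriv_eq_of_ae_eq_zero hφ hh ⟨hβ.1.trans hx.1.le, hx.2.le⟩ hb hx.2.le
      (ae_restrict_of_ae_restrict_of_subset (Icc_subset_Icc_left hx.1.le)
        ae_restrict_Icc_betaH_eq_zero)]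
    exact hconc.nonpos_of_hasDerivWithinAt_right hab hvab (hC1.2.2 b hb)
  have hαβ := alphaH_le_betaH hhne
  obtain ⟨x₀, hx₀, hmax⟩ := isCompact_Icc.exists_isMaxOn (nonempty_Icc.2 hαβ)
    (hC1.1.mono (Icc_subset_Icc hα.1 hβ.2))
  exact ⟨x₀, hx₀, hmax.of_monotoneOn_of_antitoneOn hαβ hmono hanti⟩

end IsSolutionH

theorem lower_bound_by_sup_norm
    (a b : ℝ) (hab : a < b) (φ : ℝ → ℝ) (hφ : OddIncHomeo φ)
    (h : ℝ → ℝ) (hh : IntegrableOn h (Icc a b))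
    (hh0 : ∀ᵐ x ∂(volume : Measure ℝ), x ∈ Ioo a b → 0 ≤ h x)
    (hhne : ¬ (∀ᵐ x ∂(volume : Measure ℝ), x ∈ Ioo a b → h x = 0))
    (v v' : ℝ → ℝ) (hv : IsSolutionH φ h a b v v') :
    ∀ x ∈ Icc a b,
      thetaLow h a b * sSup ((fun y => |v y|) '' Icc a b) * deltaOmega a b x ≤ v x := by
  intro x hx
  have hh0' : 0 ≤ᵐ[volume.restrict (Icc a b)] h := by
    rw [← Measure.restrict_congr_set Ioo_ae_eq_Icc]
    exact (ae_restrict_iff' measurableSet_Ioo).2 hh0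
  have hconc := hv.1.concaveOn (hv.antitoneOn_deriv hφ.1 hh hh0')
  obtain ⟨x₀, hx₀, hmax⟩ := hv.exists_isMaxOn hab hφ.1 hh hh0' hhne
  have hx₀' : x₀ ∈ Icc a b :=
    Icc_subset_Icc (alphaH_mem_Icc hab.le).1 (betaH_mem_Icc hab.le).2 hx₀
  rw [csSup_abs_image_eq_of_isMaxOn
    (fun y hy => hconc.nonneg_of_eq_zero_of_eq_zero hv.2.1 hv.2.2.1 hy) hx₀' hmax]
  exact hconc.mul_min_sub_le hv.2.1 hv.2.2.1 hx₀' (thetaLow_nonneg hab.le)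
    (thetaLow_mul_sub_left_le_one hab.le hx₀.2) (thetaLow_mul_sub_right_le_one hab.le hx₀.1) hx
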